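/- For every natural number n ≥ 1, every real d ≥ 0, and every nonempty finite subset M of 𝓜_n(d), there exists a connected graph G on 𝓜_n(d) connecting M with |G| = smt(M, 𝓜_n(d)); that is, SMT(M, 𝓜_n(d)) ≠ ∅. -/

import Mathlib

/-- A (simple) graph on a set `X`: a finite vertex set `verts ⊆ X` together with a finite
set of edges, each edge being a 2-element subset of `verts`. -/
structure GraphOn (X : Type*) where
  verts : Finset X
  edges : Finset (Sym2 X)
  mem_verts_of_mem_edges : ∀ e ∈ edges, ∀ x ∈ e, x ∈ verts
  not_isDiag : ∀ e ∈ edges, ¬ e.IsDiag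

/-- Two points are adjacent in `G` if they form an edge of `G`. -/
def GraphOn.Adj {X : Type*} (G : GraphOn X) (x y : X) : Prop := s(x, y) ∈ G.edges

/-- A graph on `X` is connected if its vertex set is nonempty and any two of its vertices
are joined by a path of edges. -/
def GraphOn.IsConnected {X : Type*} (G : GraphOn X) : Prop :=
  G.verts.Nonempty ∧ ∀ x ∈ G.verts, ∀ y ∈ G.verts, Relation.ReflTransGen G.Adj x y

/-- A graph on `X` is acyclic if it contains no cycle, i.e. no injective circular sequence
of at least three vertices with consecutive members adjacent. -/
def GraphOn.IsAcyclic {X : Type*} (G : GraphOn X) : Prop :=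
  ¬ ∃ (k : ℕ) (v : ZMod k → X), 3 ≤ k ∧ Function.Injective v ∧ ∀ i, G.Adj (v i) (v (i + 1))

/-- A tree on `X` is a connected acyclic graph on `X`. -/
def GraphOn.IsTree {X : Type*} (G : GraphOn X) : Prop := G.IsConnected ∧ G.IsAcyclic

/-- The length of a graph on a metric space: the sum of the lengths (distances between
endpoints) of all its edges. -/
noncomputable def GraphOn.length {X : Type*} [MetricSpace X] (G : GraphOn X) : ℝ :=
  ∑ e ∈ G.edges, Sym2.lift ⟨fun x y => dist x y, fun _ _ => dist_comm _ _⟩ e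

/-- A graph `G` on `X` connects a finite set `M ⊆ X` if `G` is connected and all points of `M`
are vertices of `G`. -/
def GraphOn.Connects {X : Type*} (G : GraphOn X) (M : Finset X) : Prop :=
  G.IsConnected ∧ ∀ m ∈ M, m ∈ G.verts

/-- The length of a Steiner minimal tree on a finite subset `M` of a metric space `X`:
the infimum of lengths of connected graphs on `X` connecting `M`. -/
noncomputable def smt (X : Type*) [MetricSpace X] (M : Finset X) : ℝ :=
  sInf {l : ℝ | ∃ G : GraphOn X, G.Connects M ∧ l = G.length}

/-!
A graph connecting `M` can be pruned, without increasing its length, to one with at most `2|M|`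
vertices: among its subgraphs connecting `M`, take one of minimal length and then of minimal size.
It is a tree, and a vertex outside `M` of degree at most two could be deleted, its neighbours
joined directly, so every such vertex has degree at least three; counting degrees in the tree
bounds the number of vertices.

A graph with at most `k` vertices is the image of an abstract connected graph on `Fin k` under a
map `Fin k → X`. For each of the finitely many abstract graphs the length is continuous in the map,
so on a compact `X` the minimum is attained.

Finally `𝓜_n(d)` is compact. It is totally bounded; the diameter is `2`-Lipschitz for the
Gromov–Hausdorff distance; and `n + 1` distinct points of a space yield `n + 1` distinct points of
every space closer to it than half their minimal separation. So it is also closed.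
-/

open Finset Relation

theorem exists_injective_fin_succ_of_not_card_le {α : Type*} {n : ℕ}
    (h : ¬(Finite α ∧ Nat.card α ≤ n)) : ∃ f : Fin (n + 1) → α, Function.Injective f := by
  rcases finite_or_infinite α with hα | hα
  · have : Fintype α := Fintype.ofFinite α
    have hcard := not_and.1 h hα
    rw [Nat.card_eq_fintype_card] at hcard
    obtain ⟨f⟩ := Function.Embedding.nonempty_of_card_le (α := Fin (n + 1)) (β := α)
      (by rw [Fintype.card_fin]; omega)
    exact ⟨f, f.injective⟩
  · exact ⟨_, (Fin.valEmbedding.trans (Infinite.natEmbedding α)).injective⟩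

theorem Finset.sum_union_le_of_nonneg {α : Type*} [DecidableEq α] {s t : Finset α} {f : α → ℝ}
    (hf : ∀ x ∈ s ∩ t, 0 ≤ f x) : ∑ x ∈ s ∪ t, f x ≤ ∑ x ∈ s, f x + ∑ x ∈ t, f x := by
  rw [← sum_union_inter]
  exact le_add_of_nonneg_right (sum_nonneg hf)

theorem Finset.exists_range_eq_of_card_le {ι X : Type*} [Fintype ι] {s : Finset X}
    (hs : s.Nonempty) (h : s.card ≤ Fintype.card ι) : ∃ v : ι → X, Set.range v = s := by
  obtain ⟨f⟩ := Function.Embedding.nonempty_of_card_le (α := s) (β := ι) (by simpa using h)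
  have : Nonempty s := hs.to_subtype
  exact ⟨Subtype.val ∘ Function.invFun f,
    (Function.invFun_surjective f.injective).range_comp _ |>.trans Subtype.range_coe⟩

theorem Finset.exists_forall_le_of_isCompact {α β γ : Type*} [TopologicalSpace β]
    [LinearOrder γ] [TopologicalSpace γ] [ClosedIicTopology γ] {s : Finset α} (hs : s.Nonempty)
    {C : Set β} (hC : IsCompact C) (hCne : C.Nonempty) (f : α → β → γ)
    (hf : ∀ a, ContinuousOn (f a) C) :
    ∃ a ∈ s, ∃ b ∈ C, ∀ a' ∈ s, ∀ b' ∈ C, f a b ≤ f a' b' := by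
  choose g hgC hg using fun a => hC.exists_isMinOn hCne (hf a)
  obtain ⟨a, ha, hmin⟩ := s.exists_min_image (fun a => f a (g a)) hs
  exact ⟨a, ha, g a, hgC a, fun a' ha' b' hb' => (hmin a' ha').trans (hg a' hb')⟩

theorem SimpleGraph.reachable_fromEdgeSet_of_mem {V : Type*} {s : Set (Sym2 V)} {a b : V}
    (h : s(a, b) ∈ s) : (fromEdgeSet s).Reachable a b := by
  rcases eq_or_ne a b with rfl | hab
  exacts [.refl a, Adj.reachable ((fromEdgeSet_adj _).2 ⟨h, hab⟩)]

theorem SimpleGraph.IsTree.card_add_two_le {V : Type*} [Fintype V] [Nontrivial V]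
    {H : SimpleGraph V} [DecidableRel H.Adj] (hH : H.IsTree) (T : Finset V)
    (hT : ∀ v ∉ T, 3 ≤ H.degree v) : Fintype.card V + 2 ≤ 2 * T.card := by
  classical
  have hdeg : ∀ v, 3 ≤ H.degree v + if v ∈ T then 2 else 0 := fun v => by
    split_ifs with hv
    · linarith [hH.1.preconnected.degree_pos_of_nontrivial v]
    · simpa using hT v hv
  have hsum := sum_le_sum fun v (_ : v ∈ univ) => hdeg v
  rw [sum_add_distrib, H.sum_degrees_eq_twice_card_edges, sum_ite_mem, univ_inter, sum_const,
    sum_const, card_univ, smul_eq_mul, smul_eq_mul] at hsum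
  have hE := hH.card_edgeFinset
  omega

section EdgeLength

variable {X : Type*} [PseudoMetricSpace X]

noncomputable def edgeLength (e : Sym2 X) : ℝ :=
  Sym2.lift ⟨fun x y => dist x y, fun _ _ => dist_comm _ _⟩ e

@[simp] lemma edgeLength_mk (x y : X) : edgeLength s(x, y) = dist x y := rfl

lemma edgeLength_nonneg (e : Sym2 X) : 0 ≤ edgeLength e := by
  induction e using Sym2.ind with | _ x y => exact dist_nonneg

lemma continuous_sum_edgeLength_map {ι : Type*} (E : Finset (Sym2 ι)) :
    Continuous fun v : ι → X => ∑ e ∈ E, edgeLength (e.map v) :=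
  continuous_finsetSum _ fun e _ => by
    induction e using Sym2.ind with
    | _ i j => simpa using (continuous_apply i).dist (continuous_apply j)

end EdgeLength

namespace GraphOn

variable {X : Type*} {G G' : GraphOn X} {M : Finset X} {v x y : X}

lemma Adj.symm (h : G.Adj x y) : G.Adj y x := by rwa [Adj, Sym2.eq_swap]

instance : Std.Symm G.Adj := ⟨fun _ _ => Adj.symm⟩

lemma Adj.ne (h : G.Adj x y) : x ≠ y := fun hxy => G.not_isDiag _ h (Sym2.mk_isDiag_iff.2 hxy)

lemma Adj.left_mem (h : G.Adj x y) : x ∈ G.verts :=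
  G.mem_verts_of_mem_edges _ h _ (Sym2.mem_mk_left _ _)

lemma Adj.right_mem (h : G.Adj x y) : y ∈ G.verts := h.symm.left_mem

instance [DecidableEq X] : DecidableRel G.Adj :=
  fun x y => inferInstanceAs (Decidable (s(x, y) ∈ G.edges))

lemma IsConnected.exists_adj (hG : G.IsConnected) (hx : x ∈ G.verts) (hy : y ∈ G.verts)
    (hxy : x ≠ y) : ∃ z, G.Adj x z := by
  rcases (hG.2 x hx y hy).cases_head with rfl | ⟨z, hz, -⟩
  exacts [absurd rfl hxy, ⟨z, hz⟩]

theorem finite_setOf_verts_subset (S : Finset X) : {G : GraphOn X | G.verts ⊆ S}.Finite := by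
  classical
  refine Set.Finite.of_finite_image (f := fun G : GraphOn X => (G.verts, G.edges)) ?_ ?_
  · refine (S.powerset ×ˢ S.sym2.powerset).finite_toSet.subset ?_
    rintro _ ⟨G, hG, rfl⟩
    simp only [coe_product, Set.mem_prod, mem_coe, mem_powerset]
    exact ⟨hG, fun e he => mem_sym2_iff.2 fun x hx => hG (G.mem_verts_of_mem_edges e he x hx)⟩
  · rintro ⟨V, E, _, _⟩ - ⟨V', E', _, _⟩ - h
    obtain ⟨rfl, rfl⟩ := Prod.mk.inj h
    rfl

lemma length_eq_sum [MetricSpace X] (G : GraphOn X) :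
    G.length = ∑ e ∈ G.edges, edgeLength e := rfl

lemma length_nonneg [MetricSpace X] (G : GraphOn X) : 0 ≤ G.length :=
  sum_nonneg fun e _ => edgeLength_nonneg e

section Surgery

variable [DecidableEq X]

def eraseEdge (G : GraphOn X) (e : Sym2 X) : GraphOn X where
  verts := G.verts
  edges := G.edges.erase e
  mem_verts_of_mem_edges e' he' := G.mem_verts_of_mem_edges e' (mem_of_mem_erase he')
  not_isDiag e' he' := G.not_isDiag e' (mem_of_mem_erase he')

def neighbors (G : GraphOn X) (v : X) : Finset X := G.verts.filter (G.Adj v)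

lemma mem_neighbors {a : X} : a ∈ G.neighbors v ↔ G.Adj v a :=
  ⟨fun h => (mem_filter.1 h).2, fun h => mem_filter.2 ⟨h.right_mem, h⟩⟩

def splice (G : GraphOn X) (v : X) : GraphOn X where
  verts := G.verts.erase v
  edges := G.edges.filter (v ∉ ·) ∪ (G.neighbors v).sym2.filter (¬ ·.IsDiag)
  mem_verts_of_mem_edges e he x hx := by
    rcases mem_union.1 he with he | he
    · rw [mem_filter] at he
      exact mem_erase.2 ⟨by rintro rfl; exact he.2 hx, G.mem_verts_of_mem_edges e he.1 x hx⟩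
    · have hvx := mem_neighbors.1 (mem_sym2_iff.1 (mem_filter.1 he).1 x hx)
      exact mem_erase.2 ⟨hvx.ne.symm, hvx.right_mem⟩
  not_isDiag e he := by
    rcases mem_union.1 he with he | he
    exacts [G.not_isDiag e (mem_filter.1 he).1, (mem_filter.1 he).2]

lemma length_eraseEdge [MetricSpace X] (h : G.Adj x y) :
    (G.eraseEdge s(x, y)).length = G.length - dist x y := by
  rw [length_eq_sum, length_eq_sum, ← add_sum_erase _ _ h, edgeLength_mk, add_sub_cancel_left]
  rfl

lemma IsConnected.eraseEdge (hG : G.IsConnected)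
    (h : ReflTransGen (G.eraseEdge s(x, y)).Adj x y) : (G.eraseEdge s(x, y)).IsConnected := by
  refine ⟨hG.1, fun u hu w hw => (hG.2 u hu w hw).lift' id fun a b hab => ?_⟩
  by_cases he : s(a, b) = s(x, y)
  · rcases Sym2.eq_iff.1 he with ⟨rfl, rfl⟩ | ⟨rfl, rfl⟩
    exacts [h, ReflTransGen.stdSymm.symm _ _ h]
  · exact .single (mem_erase.2 ⟨he, hab⟩)

lemma reflTransGen_splice {a : X} (ha : G.Adj v a) (hx : x ≠ v) (hy : y ≠ v)
    (h : ReflTransGen G.Adj x y) : ReflTransGen (G.splice v).Adj x y := by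
  have hnbrs : ∀ b c, G.Adj v b → G.Adj v c → ReflTransGen (G.splice v).Adj b c := by
    intro b c hb hc
    rcases eq_or_ne b c with rfl | hbc
    · rfl
    · exact .single (mem_union_right _ (mem_filter.2
        ⟨mk_mem_sym2_iff.2 ⟨mem_neighbors.2 hb, mem_neighbors.2 hc⟩, by simpa using hbc⟩))
  -- a path through `v` is rerouted through its neighbour `a`
  have key := h.lift' (p := (G.splice v).Adj) (fun u => if u = v then a else u)
    fun b c hbc => ?_
  · simpa [Function.onFun, hx, hy] using key
  rcases eq_or_ne b v with rfl | hb
  · simpa [Function.onFun, hbc.ne.symm] using hnbrs a c ha hbc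
  rcases eq_or_ne c v with rfl | hc
  · simpa [Function.onFun, hb] using hnbrs b a hbc.symm ha
  refine .single ?_
  simp only [hb, hc, if_false]
  exact mem_union_left _ (mem_filter.2 ⟨hbc, by simp [Sym2.mem_iff, hb.symm, hc.symm]⟩)

lemma Connects.splice (hG : G.Connects M) (hM : M.Nonempty) {a : X} (ha : G.Adj v a)
    (hvM : v ∉ M) : (G.splice v).Connects M := by
  have hM' : ∀ m ∈ M, m ∈ (G.splice v).verts := fun m hm =>
    mem_erase.2 ⟨by rintro rfl; exact hvM hm, hG.2 m hm⟩
  refine ⟨⟨hM.imp hM', fun x hx y hy => ?_⟩, hM'⟩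
  obtain ⟨hxv, hx⟩ := mem_erase.1 hx
  obtain ⟨hyv, hy⟩ := mem_erase.1 hy
  exact reflTransGen_splice ha hxv hyv (hG.1.2 x hx y hy)

lemma sum_edgeLength_neighbors_sym2_le [MetricSpace X] (hv : (G.neighbors v).card ≤ 2) :
    ∑ e ∈ (G.neighbors v).sym2.filter (¬ ·.IsDiag), edgeLength e ≤
      ∑ e ∈ G.edges.filter (v ∈ ·), edgeLength e := by
  rcases Nat.lt_or_eq_of_le hv with hv | hv
  · rw [filter_eq_empty_iff.2 fun e he => ?_, sum_empty]
    · exact sum_nonneg fun e _ => edgeLength_nonneg e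
    induction e using Sym2.ind with
    | _ b c => exact not_not_intro <| Sym2.mk_isDiag_iff.2 <|
        card_le_one.1 (by omega) b (mk_mem_sym2_iff.1 he).1 c (mk_mem_sym2_iff.1 he).2
  obtain ⟨b, c, hbc, hN⟩ := card_eq_two.1 hv
  have hb : G.Adj v b := mem_neighbors.1 (by simp [hN])
  have hc : G.Adj v c := mem_neighbors.1 (by simp [hN])
  have hsub : (G.neighbors v).sym2.filter (¬ ·.IsDiag) ⊆ {s(b, c)} := fun e he => by
    induction e using Sym2.ind with
    | _ x y =>
      simp only [hN, mem_filter, mk_mem_sym2_iff, mem_insert, mem_singleton,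
        Sym2.mk_isDiag_iff] at he
      rcases he with ⟨⟨rfl | rfl, rfl | rfl⟩, hxy⟩ <;> simp_all [Sym2.eq_swap]
  have hpair : s(v, b) ≠ s(v, c) := fun h => hbc (Sym2.congr_right.1 h)
  calc _ ≤ ∑ e ∈ {s(b, c)}, edgeLength e :=
        sum_le_sum_of_subset_of_nonneg hsub fun e _ _ => edgeLength_nonneg e
    _ ≤ dist v b + dist v c := by simpa using dist_triangle_left b c v
    _ = ∑ e ∈ {s(v, b), s(v, c)}, edgeLength e := by simp [sum_pair hpair]
    _ ≤ _ := by
        refine sum_le_sum_of_subset_of_nonneg ?_ fun e _ _ => edgeLength_nonneg e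
        simpa [insert_subset_iff] using ⟨hb, hc⟩

lemma length_splice_le [MetricSpace X] (hv : (G.neighbors v).card ≤ 2) :
    (G.splice v).length ≤ G.length := by
  have hsplit := sum_filter_not_add_sum_filter G.edges (v ∈ ·) edgeLength
  have hunion := sum_union_le_of_nonneg (s := G.edges.filter (v ∉ ·))
    (t := (G.neighbors v).sym2.filter (¬ ·.IsDiag)) fun e _ => edgeLength_nonneg e
  rw [length_eq_sum, length_eq_sum]
  change ∑ e ∈ G.edges.filter (v ∉ ·) ∪ (G.neighbors v).sym2.filter (¬ ·.IsDiag),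
    edgeLength e ≤ _
  linarith [sum_edgeLength_neighbors_sym2_le hv]

end Surgery

section Tree

def toSimpleGraph (G : GraphOn X) : SimpleGraph G.verts where
  Adj a b := G.Adj a b
  symm := ⟨fun _ _ h => Adj.symm h⟩
  loopless := ⟨fun _ h => Adj.ne h rfl⟩

@[simp] lemma toSimpleGraph_adj {a b : G.verts} : G.toSimpleGraph.Adj a b ↔ G.Adj a b := Iff.rfl

instance [DecidableEq X] : DecidableRel G.toSimpleGraph.Adj :=
  fun a b => inferInstanceAs (Decidable (G.Adj a b))

lemma IsConnected.toSimpleGraph_connected (hG : G.IsConnected) : G.toSimpleGraph.Connected := by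
  have : Nonempty G.verts := hG.1.to_subtype
  refine ⟨fun ⟨x, hx⟩ ⟨y, hy⟩ => (SimpleGraph.reachable_iff_reflTransGen _ _).2 ?_⟩
  have key : ∀ z, ReflTransGen G.Adj x z →
      ∀ hz : z ∈ G.verts, ReflTransGen G.toSimpleGraph.Adj ⟨x, hx⟩ ⟨z, hz⟩ := by
    intro z h
    induction h with
    | refl => exact fun _ => .refl
    | tail _ hbc ih => exact fun _ => (ih hbc.left_mem).tail hbc
  exact key y (hG.2 x hx y hy) hy

lemma isTree_toSimpleGraph [DecidableEq X] (hG : G.IsConnected)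
    (hbridge : ∀ x y, G.Adj x y → ¬ReflTransGen (G.eraseEdge s(x, y)).Adj x y) :
    G.toSimpleGraph.IsTree := by
  refine ⟨hG.toSimpleGraph_connected,
    SimpleGraph.isAcyclic_iff_forall_isBridge.2 fun e he => ?_⟩
  induction e using Sym2.ind with
  | _ a b =>
  rw [SimpleGraph.isBridge_iff]
  intro hr
  refine hbridge a b he (((SimpleGraph.reachable_iff_reflTransGen _ _).1 hr).lift Subtype.val ?_)
  intro u w huw
  rw [SimpleGraph.deleteEdges_adj] at huw
  refine mem_erase.2 ⟨fun h => huw.2 ?_, huw.1⟩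
  rw [Set.mem_singleton_iff, ← Sym2.map.injective Subtype.val_injective |>.eq_iff]
  simpa using h

lemma degree_toSimpleGraph [DecidableEq X] (a : G.verts) :
    G.toSimpleGraph.degree a = (G.neighbors a).card := by
  rw [← SimpleGraph.card_neighborFinset_eq_degree, ← card_map (Function.Embedding.subtype _)]
  congr 1
  ext x
  simp only [mem_map, SimpleGraph.mem_neighborFinset, toSimpleGraph_adj, mem_neighbors]
  exact ⟨fun ⟨_, h, hx⟩ => hx ▸ h, fun h => ⟨⟨x, h.right_mem⟩, h, rfl⟩⟩

end Tree

section LexMinimal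

variable [MetricSpace X]

def IsLexMinimal (M : Finset X) (G : GraphOn X) : Prop :=
  ∀ G' : GraphOn X, G'.Connects M → G'.verts ⊆ G.verts →
    toLex (G.length, G.verts.card) ≤ toLex (G'.length, G'.verts.card)

theorem Connects.exists_isLexMinimal (hG : G.Connects M) :
    ∃ G₀ : GraphOn X, G₀.Connects M ∧ G₀.length ≤ G.length ∧ G₀.IsLexMinimal M := by
  obtain ⟨G₀, ⟨hG₀, hsub⟩, hmin⟩ := Set.exists_min_image
    {G' : GraphOn X | G'.Connects M ∧ G'.verts ⊆ G.verts}
    (fun G' => toLex (G'.length, G'.verts.card))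
    ((finite_setOf_verts_subset G.verts).subset fun _ h => h.2) ⟨G, hG, subset_rfl⟩
  refine ⟨G₀, hG₀, ?_, fun G' hG' hsub' => hmin G' ⟨hG', hsub'.trans hsub⟩⟩
  rcases Prod.Lex.toLex_le_toLex.1 (hmin G ⟨hG, subset_rfl⟩) with h | h
  exacts [h.le, h.1.le]

namespace IsLexMinimal

lemma length_le (hmin : G.IsLexMinimal M) (hG' : G'.Connects M) (hsub : G'.verts ⊆ G.verts) :
    G.length ≤ G'.length := by
  rcases Prod.Lex.toLex_le_toLex.1 (hmin G' hG' hsub) with h | h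
  exacts [h.le, h.1.le]

lemma card_verts_le_of_length_le (hmin : G.IsLexMinimal M) (hG' : G'.Connects M)
    (hsub : G'.verts ⊆ G.verts) (hlen : G'.length ≤ G.length) :
    G.verts.card ≤ G'.verts.card := by
  rcases Prod.Lex.toLex_le_toLex.1 (hmin G' hG' hsub) with h | h
  exacts [absurd hlen (not_le.2 h), h.2]

variable [DecidableEq X]

lemma not_reflTransGen_eraseEdge (hmin : G.IsLexMinimal M) (hG : G.Connects M)
    (h : G.Adj x y) : ¬ReflTransGen (G.eraseEdge s(x, y)).Adj x y := fun hr => by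
  have hlen := hmin.length_le ⟨hG.1.eraseEdge hr, hG.2⟩ subset_rfl
  rw [length_eraseEdge h] at hlen
  linarith [dist_pos.2 h.ne]

lemma three_le_card_neighbors (hmin : G.IsLexMinimal M) (hG : G.Connects M) (hM : M.Nonempty)
    (hv : v ∈ G.verts) (hvM : v ∉ M) : 3 ≤ (G.neighbors v).card := by
  by_contra! hlt
  obtain ⟨m, hm⟩ := hM
  obtain ⟨a, ha⟩ := hG.1.exists_adj hv (hG.2 m hm) (by rintro rfl; exact hvM hm)
  have hcard := hmin.card_verts_le_of_length_le (hG.splice ⟨m, hm⟩ ha hvM) (erase_subset _ _)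
    (length_splice_le (by omega))
  have hpos := card_pos.2 ⟨v, hv⟩
  rw [show (G.splice v).verts = G.verts.erase v from rfl, card_erase_of_mem hv] at hcard
  omega

theorem card_verts_le (hmin : G.IsLexMinimal M) (hG : G.Connects M) (hM : M.Nonempty) :
    G.verts.card ≤ 2 * M.card := by
  by_cases hV : G.verts.card ≤ 1
  · linarith [hM.card_pos]
  have : Nontrivial G.verts :=
    Fintype.one_lt_card_iff_nontrivial.1 (by rw [Fintype.card_coe]; omega)
  have htree := isTree_toSimpleGraph hG.1 fun x y h => hmin.not_reflTransGen_eraseEdge hG h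
  have hcount := htree.card_add_two_le (univ.filter fun a : G.verts => a.1 ∈ M) fun a ha => by
    rw [degree_toSimpleGraph]
    exact hmin.three_le_card_neighbors hG hM a.2 (by simpa using ha)
  have hT : (univ.filter fun a : G.verts => a.1 ∈ M).card ≤ M.card :=
    card_le_card_of_injOn Subtype.val (fun a ha => by simpa using ha)
      Subtype.val_injective.injOn
  rw [Fintype.card_coe] at hcount
  omega

end IsLexMinimal

theorem Connects.exists_length_le_card_verts_le (hG : G.Connects M) (hM : M.Nonempty) :
    ∃ G' : GraphOn X, G'.Connects M ∧ G'.length ≤ G.length ∧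
      G'.verts.card ≤ 2 * M.card := by
  classical
  obtain ⟨G₀, hG₀, hlen, hmin⟩ := hG.exists_isLexMinimal
  exact ⟨G₀, hG₀, hlen, hmin.card_verts_le hG₀ hM⟩

end LexMinimal

section OfMap

variable {ι : Type*} [Fintype ι]

def ofMap [DecidableEq X] (E : Finset (Sym2 ι)) (v : ι → X) : GraphOn X where
  verts := univ.image v
  edges := (E.image (Sym2.map v)).filter (¬ ·.IsDiag)
  mem_verts_of_mem_edges e he x hx := by
    obtain ⟨e', -, rfl⟩ := mem_image.1 (mem_filter.1 he).1
    obtain ⟨i, -, rfl⟩ := Sym2.mem_map.1 hx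
    exact mem_image_of_mem v (mem_univ i)
  not_isDiag e he := (mem_filter.1 he).2

lemma connects_ofMap [DecidableEq X] [Nonempty ι] {E : Finset (Sym2 ι)} {v : ι → X}
    (hE : (SimpleGraph.fromEdgeSet (E : Set (Sym2 ι))).Connected)
    (hM : ∀ m ∈ M, m ∈ Set.range v) : (ofMap E v).Connects M := by
  refine ⟨⟨univ_nonempty.image v, fun x hx y hy => ?_⟩, fun m hm => ?_⟩
  · obtain ⟨i, -, rfl⟩ := mem_image.1 hx
    obtain ⟨j, -, rfl⟩ := mem_image.1 hy
    refine ((SimpleGraph.reachable_iff_reflTransGen _ _).1 (hE.preconnected i j)).lift' v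
      fun a b hab => ?_
    rcases eq_or_ne (v a) (v b) with h | h
    · simp only [Function.onFun, h]
      exact .refl
    · exact .single (mem_filter.2 ⟨mem_image.2 ⟨s(a, b),
        ((SimpleGraph.fromEdgeSet_adj _).1 hab).1, rfl⟩, by simpa using h⟩)
  · obtain ⟨i, rfl⟩ := hM m hm
    exact mem_image_of_mem v (mem_univ i)

variable [MetricSpace X]

lemma length_ofMap_le [DecidableEq X] (E : Finset (Sym2 ι)) (v : ι → X) :
    (ofMap E v).length ≤ ∑ e ∈ E, edgeLength (e.map v) :=
  calc (ofMap E v).length ≤ ∑ e ∈ E.image (Sym2.map v), edgeLength e :=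
        sum_le_sum_of_subset_of_nonneg (filter_subset _ _) fun e _ _ => edgeLength_nonneg e
    _ ≤ _ := sum_image_le_of_nonneg fun e _ => edgeLength_nonneg e

theorem IsConnected.exists_finset_sym2 (hG : G.IsConnected)
    (hk : G.verts.card ≤ Fintype.card ι) : ∃ (E : Finset (Sym2 ι)) (v : ι → X),
      (SimpleGraph.fromEdgeSet (E : Set (Sym2 ι))).Connected ∧ Set.range v = G.verts ∧
        ∑ e ∈ E, edgeLength (e.map v) ≤ G.length := by
  classical
  obtain ⟨v, hv⟩ := Finset.exists_range_eq_of_card_le hG.1 hk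
  have : Nonempty ι := Fintype.card_pos_iff.1 (hG.1.card_pos.trans_le hk)
  set σ := Function.invFun v
  have hσ : ∀ x ∈ G.verts, v (σ x) = x := fun x hx =>
    Function.invFun_eq (show x ∈ Set.range v from hv ▸ hx)
  set E₁ := G.edges.image (Sym2.map σ)
  set E₂ := univ.image fun i => s(i, σ (v i))
  refine ⟨E₁ ∪ E₂, v, ?_, hv, ?_⟩
  · -- each `i` is joined to `σ (v i)`, and these are joined along the paths of `G`
    set H := SimpleGraph.fromEdgeSet (↑(E₁ ∪ E₂) : Set (Sym2 ι))
    have hpad : ∀ i, H.Reachable i (σ (v i)) := fun i =>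
      SimpleGraph.reachable_fromEdgeSet_of_mem (mem_union_right _ (mem_image_of_mem _ (mem_univ i)))
    have hG' : ∀ x ∈ G.verts, ∀ y ∈ G.verts, H.Reachable (σ x) (σ y) := by
      intro x hx y hy
      rw [SimpleGraph.reachable_iff_reflTransGen]
      refine (hG.2 x hx y hy).lift' (p := H.Adj) σ fun a b hab => ?_
      rw [Function.onFun, ← SimpleGraph.reachable_iff_reflTransGen]
      exact SimpleGraph.reachable_fromEdgeSet_of_mem
        (mem_union_left _ (mem_image.2 ⟨_, hab, Sym2.map_mk σ a b⟩))
    have hvG : ∀ i, v i ∈ G.verts := fun i => by simp [← mem_coe, ← hv]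
    refine (SimpleGraph.connected_iff _).2 ⟨fun i j => ?_, inferInstance⟩
    exact (hpad i).trans ((hG' _ (hvG i) _ (hvG j)).trans (hpad j).symm)
  · have h₁ : ∑ e ∈ E₁, edgeLength (e.map v) ≤ G.length := by
      refine (sum_image_le_of_nonneg fun e _ => edgeLength_nonneg _).trans_eq
        (sum_congr rfl fun e he => ?_)
      induction e using Sym2.ind with
      | _ x y => simp [hσ x (G.mem_verts_of_mem_edges _ he x (Sym2.mem_mk_left x y)),
          hσ y (G.mem_verts_of_mem_edges _ he y (Sym2.mem_mk_right x y))]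
    have h₂ : ∑ e ∈ E₂, edgeLength (e.map v) ≤ 0 := by
      refine (sum_image_le_of_nonneg fun e _ => edgeLength_nonneg _).trans_eq
        (sum_eq_zero fun i _ => ?_)
      simp [Function.invFun_eq (⟨i, rfl⟩ : ∃ j, v j = v i), σ]
    linarith [sum_union_le_of_nonneg (s := E₁) (t := E₂) fun e _ => edgeLength_nonneg (e.map v)]

theorem exists_connects_forall_length_le [CompactSpace X] (hM : M.Nonempty)
    (hι : M.card ≤ Fintype.card ι) : ∃ G : GraphOn X, G.Connects M ∧
      ∀ G' : GraphOn X, G'.Connects M → G'.verts.card ≤ Fintype.card ι →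
        G.length ≤ G'.length := by
  classical
  have : Nonempty ι := Fintype.card_pos_iff.1 (hM.card_pos.trans_le hι)
  set C : Set (ι → X) := {v | ∀ m ∈ M, m ∈ Set.range v}
  have hC : IsClosed C := by
    have hC : C = ⋂ m ∈ M, ⋃ i, {v | v i = m} := by ext; simp [C, eq_comm]
    rw [hC]
    exact isClosed_biInter fun m _ => isClosed_iUnion_of_finite fun i =>
      isClosed_eq (continuous_apply i) continuous_const
  have hCne : C.Nonempty := by
    obtain ⟨v, hv⟩ := Finset.exists_range_eq_of_card_le hM hι
    exact ⟨v, fun m hm => hv ▸ hm⟩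
  obtain ⟨E₀, hE₀, v₀, hv₀, hmin⟩ := Finset.exists_forall_le_of_isCompact
    (s := univ.filter fun E : Finset (Sym2 ι) =>
      (SimpleGraph.fromEdgeSet (E : Set (Sym2 ι))).Connected)
    ⟨univ, by simp⟩ hC.isCompact hCne (fun E v => ∑ e ∈ E, edgeLength (e.map v))
    fun E => (continuous_sum_edgeLength_map E).continuousOn
  refine ⟨ofMap E₀ v₀, connects_ofMap (mem_filter.1 hE₀).2 hv₀, fun G hG hcard => ?_⟩
  obtain ⟨E, v, hE, hv, hEv⟩ := hG.1.exists_finset_sym2 hcard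
  calc (ofMap E₀ v₀).length
      _ ≤ ∑ e ∈ E₀, edgeLength (e.map v₀) := length_ofMap_le E₀ v₀
      _ ≤ ∑ e ∈ E, edgeLength (e.map v) :=
        hmin E (by simpa using hE) v fun m hm => hv ▸ hG.2 m hm
      _ ≤ G.length := hEv

end OfMap

theorem exists_connects_length_eq_smt [MetricSpace X] [CompactSpace X] (hM : M.Nonempty) :
    ∃ G : GraphOn X, G.Connects M ∧ G.length = smt X M := by
  obtain ⟨G₀, hG₀, hmin⟩ :=
    exists_connects_forall_length_le (ι := Fin (2 * M.card)) hM (by simp; omega)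
  have hbdd : BddBelow {l | ∃ G : GraphOn X, G.Connects M ∧ l = G.length} :=
    ⟨0, by rintro _ ⟨G, -, rfl⟩; exact G.length_nonneg⟩
  refine ⟨G₀, hG₀, le_antisymm (le_csInf ⟨_, _, hG₀, rfl⟩ ?_)
    (csInf_le hbdd ⟨_, hG₀, rfl⟩)⟩
  rintro _ ⟨G, hG, rfl⟩
  obtain ⟨G', hG', hlen, hcard⟩ := hG.exists_length_le_card_verts_le hM
  exact (hmin G' hG' (by simpa using hcard)).trans hlen

end GraphOn

namespace GromovHausdorff

open Metric Filter Topology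

theorem exists_dist_optimalGHInj_le (p q : GHSpace) (x : p.Rep) :
    ∃ y : q.Rep,
      dist (optimalGHInjl p.Rep q.Rep x) (optimalGHInjr p.Rep q.Rep y) ≤ dist p q := by
  have hl := isometry_optimalGHInjl p.Rep q.Rep
  have hr := isometry_optimalGHInjr p.Rep q.Rep
  obtain ⟨_, ⟨y, rfl⟩, hy⟩ := (isCompact_range hr.continuous).exists_infDist_eq_dist
    (Set.range_nonempty _) (optimalGHInjl p.Rep q.Rep x)
  refine ⟨y, hy ▸ ?_⟩
  rw [dist_ghDist, ← hausdorffDist_optimal]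
  exact infDist_le_hausdorffDist_of_mem (Set.mem_range_self x)
    (hausdorffEDist_ne_top_of_nonempty_of_bounded (Set.range_nonempty _) (Set.range_nonempty _)
      (isCompact_range hl.continuous).isBounded (isCompact_range hr.continuous).isBounded)

theorem diam_le_diam_add_two_mul_dist (p q : GHSpace) :
    diam (Set.univ : Set p.Rep) ≤ diam (Set.univ : Set q.Rep) + 2 * dist p q := by
  refine diam_le_of_forall_dist_le (by positivity) fun x _ y _ => ?_
  obtain ⟨x', hx'⟩ := exists_dist_optimalGHInj_le p q x
  obtain ⟨y', hy'⟩ := exists_dist_optimalGHInj_le p q y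
  have hxy' : dist x' y' ≤ diam (Set.univ : Set q.Rep) :=
    dist_le_diam_of_mem isBounded_of_compactSpace (Set.mem_univ _) (Set.mem_univ _)
  have := dist_triangle4 (optimalGHInjl p.Rep q.Rep x) (optimalGHInjr p.Rep q.Rep x')
    (optimalGHInjr p.Rep q.Rep y') (optimalGHInjl p.Rep q.Rep y)
  rw [(isometry_optimalGHInjl p.Rep q.Rep).dist_eq, (isometry_optimalGHInjr p.Rep q.Rep).dist_eq,
    dist_comm _ (optimalGHInjl p.Rep q.Rep y)] at this
  linarith

theorem exists_injective_of_two_mul_dist_lt {p q : GHSpace} {ι : Type*} (f : ι → p.Rep)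
    (hf : ∀ i j, i ≠ j → 2 * dist p q < dist (f i) (f j)) :
    ∃ g : ι → q.Rep, Function.Injective g := by
  choose g hg using fun i => exists_dist_optimalGHInj_le p q (f i)
  refine ⟨g, fun i j hij => by_contra fun hne => ?_⟩
  have := dist_triangle4 (optimalGHInjl p.Rep q.Rep (f i)) (optimalGHInjr p.Rep q.Rep (g i))
    (optimalGHInjr p.Rep q.Rep (g j)) (optimalGHInjl p.Rep q.Rep (f j))
  rw [(isometry_optimalGHInjl p.Rep q.Rep).dist_eq, hij, dist_self,
    dist_comm _ (optimalGHInjl p.Rep q.Rep (f j))] at this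
  linarith [hf i j hne, hij ▸ hg i, hg j]

theorem isClosed_setOf_card_le (n : ℕ) :
    IsClosed {p : GHSpace | Finite p.Rep ∧ Nat.card p.Rep ≤ n} := by
  refine isOpen_compl_iff.1 (isOpen_iff_mem_nhds.2 fun p hp => ?_)
  obtain ⟨f, hf⟩ := exists_injective_fin_succ_of_not_card_le hp
  have hclose : ∀ᶠ q in 𝓝 p, ∀ i j, i ≠ j → 2 * dist p q < dist (f i) (f j) := by
    refine eventually_all.2 fun i => eventually_all.2 fun j => ?_
    by_cases hij : i = j
    · exact .of_forall fun _ h => absurd hij h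
    have hlim : Tendsto (fun q => 2 * dist p q) (𝓝 p) (𝓝 0) := by
      simpa using ((tendsto_const_nhds (x := p)).dist (tendsto_id (x := 𝓝 p))).const_mul 2
    exact (hlim.eventually (gt_mem_nhds (dist_pos.2 (hf.ne hij)))).mono fun _ h _ => h
  filter_upwards [hclose] with q hq ⟨_, hcard⟩
  obtain ⟨g, hg⟩ := exists_injective_of_two_mul_dist_lt f hq
  have := Nat.card_le_card_of_injective g hg
  simp only [Nat.card_eq_fintype_card, Fintype.card_fin] at this
  omega

theorem isCompact_setOf_card_le_diam_le (n : ℕ) (d : ℝ) :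
    IsCompact {p : GHSpace | (Finite p.Rep ∧ Nat.card p.Rep ≤ n) ∧
      diam (Set.univ : Set p.Rep) ≤ d} := by
  refine TotallyBounded.isCompact_of_isClosed ?_ ((isClosed_setOf_card_le n).inter ?_)
  · refine totallyBounded (C := d) (u := fun k => 1 / (k + 1)) (K := fun _ => n)
      tendsto_one_div_add_atTop_nhds_zero_nat (fun p hp => hp.2) fun p hp k => ?_
    have := hp.1.1
    refine ⟨Set.univ, ?_, fun x _ =>
      Set.mem_biUnion (Set.mem_univ x) (mem_ball_self (by positivity))⟩
    rw [Cardinal.mk_univ, ← Nat.cast_card]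
    exact_mod_cast hp.1.2
  · exact isClosed_le (LipschitzWith.of_le_add_mul 2 diam_le_diam_add_two_mul_dist).continuous
      continuous_const

end GromovHausdorff

theorem SMT_nonempty_in_M_n_d_general (n : ℕ) (d : ℝ)
    (M : Finset {p : GromovHausdorff.GHSpace //
      (Finite p.Rep ∧ Nat.card p.Rep ≤ n) ∧ Metric.diam (Set.univ : Set p.Rep) ≤ d})
    (hM : M.Nonempty) :
    ∃ G : GraphOn {p : GromovHausdorff.GHSpace //
        (Finite p.Rep ∧ Nat.card p.Rep ≤ n) ∧ Metric.diam (Set.univ : Set p.Rep) ≤ d},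
      G.Connects M ∧ G.length = smt _ M := by
  have : CompactSpace {p : GromovHausdorff.GHSpace //
      (Finite p.Rep ∧ Nat.card p.Rep ≤ n) ∧ Metric.diam (Set.univ : Set p.Rep) ≤ d} :=
    isCompact_iff_compactSpace.mp (GromovHausdorff.isCompact_setOf_card_le_diam_le n d)
  exact GraphOn.exists_connects_length_eq_smt hM

/-- For `n ≥ 1`, `d ≥ 0` and any nonempty finite subset `M` of the space `𝓜_n(d)` of all
(isometry classes of) compact metric spaces with at most `n` points and diameter at most `d`
(with the Gromov–Hausdorff metric), there is a Steiner minimal tree on `M` in `𝓜_n(d)`: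
a connected graph `G` on `𝓜_n(d)` connecting `M` with `|G| = smt(M, 𝓜_n(d))`. -/
theorem SMT_nonempty_in_M_n_d (n : ℕ) (hn : 1 ≤ n) (d : ℝ) (hd : 0 ≤ d)
    (M : Finset {p : GromovHausdorff.GHSpace //
      (Finite p.Rep ∧ Nat.card p.Rep ≤ n) ∧ Metric.diam (Set.univ : Set p.Rep) ≤ d})
    (hM : M.Nonempty) :
    ∃ G : GraphOn {p : GromovHausdorff.GHSpace //
        (Finite p.Rep ∧ Nat.card p.Rep ≤ n) ∧ Metric.diam (Set.univ : Set p.Rep) ≤ d},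
      G.Connects M ∧ G.length = smt _ M :=
  SMT_nonempty_in_M_n_d_general n d M hM
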